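/- Let η, η̂ ∈ ℝ with η̂ ≠ η, and let z¹, z², ρ, ρ̂ : ℝ² → ℝ be smooth (C^∞) functions of (x,t) with ρ̂(x,t) ≠ ρ(x,t) for all (x,t), satisfying the coupled Schrödinger system z¹_t = 2 (z¹)² z² + z¹_xx and z²_t = −2 z¹ (z²)² − z²_xx, the Riccati system ρ_x = z² ρ² − 2η ρ + z¹, ρ_t = (−2η z² − z²_x) ρ² + (2 z¹ z² + 4η²) ρ − 2η z¹ + z¹_x, and the Riccati system ρ̂_x = z² ρ̂² − 2η̂ ρ̂ + z¹, ρ̂_t = (−2η̂ z² − z²_x) ρ̂² + (2 z¹ z² + 4η̂²) ρ̂ − 2η̂ z¹ + z¹_x. Define z¹' := ((2η − 2η̂) ρ ρ̂ + z¹ (ρ − ρ̂))/(ρ − ρ̂) and z²' := ((ρ − ρ̂) z² − 2η + 2η̂)/(ρ − ρ̂). Then the pair (z¹', z²') satisfies the coupled Schrödinger system: z¹'_t = 2 (z¹')² z²' + z¹'_xx and z²'_t = −2 z¹' (z²')² − z²'_xx. -/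

import Mathlib

/-- Partial derivative in the first variable `x`. -/
noncomputable def px (f : ℝ → ℝ → ℝ) : ℝ → ℝ → ℝ := fun x t => deriv (fun y => f y t) x

/-- Partial derivative in the second variable `t`. -/
noncomputable def pt (f : ℝ → ℝ → ℝ) : ℝ → ℝ → ℝ := fun x t => deriv (fun s => f x s) t

/-!
With `c = 2(η - η̂)` the new fields are `z¹' = z¹ + c ρρ̂/(ρ - ρ̂)` and `z²' = z² - c/(ρ - ρ̂)`.
Eliminating the derivatives of `ρ` and `ρ̂` through the Riccati equations makes `z¹'_x` and
`z²'_x` explicit rational functions of `ρ, ρ̂, z¹, z², z¹_x, z²_x`; differentiating these once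
more and substituting the `t`-equations of the covering and of the system turns each evolution
equation for `(z¹', z²')` into an identity of rational functions.
-/

open Function

lemma px_eq_of_hasDerivAt {f : ℝ → ℝ → ℝ} {x t v : ℝ} (h : HasDerivAt (fun y => f y t) v x) :
    px f x t = v :=
  h.deriv

lemma pt_eq_of_hasDerivAt {f : ℝ → ℝ → ℝ} {x t v : ℝ} (h : HasDerivAt (fun s => f x s) v t) :
    pt f x t = v :=
  h.deriv

lemma hasDerivAt_px {f : ℝ → ℝ → ℝ} (hf : Differentiable ℝ (uncurry f)) (x t : ℝ) :
    HasDerivAt (fun y => f y t) (px f x t) x :=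
  ((hf.comp (differentiable_id.prodMk (differentiable_const t))) x).hasDerivAt

lemma hasDerivAt_pt {f : ℝ → ℝ → ℝ} (hf : Differentiable ℝ (uncurry f)) (x t : ℝ) :
    HasDerivAt (fun s => f x s) (pt f x t) t :=
  ((hf.comp ((differentiable_const x).prodMk differentiable_id)) t).hasDerivAt

lemma differentiable_px {f : ℝ → ℝ → ℝ} (hf : ContDiff ℝ 2 (uncurry f)) :
    Differentiable ℝ (uncurry (px f)) := by
  have hdiff : Differentiable ℝ (uncurry f) := hf.differentiable (by norm_num)
  have hfderiv : uncurry (px f) = fun p => fderiv ℝ (uncurry f) p (1, 0) := by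
    funext ⟨x, t⟩
    have hline : HasDerivAt (fun y : ℝ => (y, t)) ((1 : ℝ), (0 : ℝ)) x :=
      (hasDerivAt_id x).prodMk (hasDerivAt_const x t)
    exact ((hdiff (x, t)).hasFDerivAt.comp_hasDerivAt x hline).deriv
  rw [hfderiv]
  exact ((hf.fderiv_right (m := 1) (by norm_num)).clm_apply contDiff_const).differentiable
    (by norm_num)

section OneVariable

variable {r rh a : ℝ → ℝ} {r' rh' a' η ηh s : ℝ}

lemma hasDerivAt_backlund₁ (hr : HasDerivAt r r' s) (hrh : HasDerivAt rh rh' s)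
    (ha : HasDerivAt a a' s) (hsep : r s - rh s ≠ 0) :
    HasDerivAt (fun s => ((2 * η - 2 * ηh) * r s * rh s + a s * (r s - rh s)) / (r s - rh s))
      (a' + (2 * η - 2 * ηh) * (r s ^ 2 * rh' - rh s ^ 2 * r') / (r s - rh s) ^ 2) s := by
  refine ((((hr.const_mul (2 * η - 2 * ηh)).mul hrh).add (ha.mul (hr.sub hrh))).div
    (hr.sub hrh) hsep).congr_deriv ?_
  simp only [Pi.add_apply, Pi.sub_apply, Pi.mul_apply]
  field_simp
  ring

lemma hasDerivAt_backlund₂ (hr : HasDerivAt r r' s) (hrh : HasDerivAt rh rh' s)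
    (ha : HasDerivAt a a' s) (hsep : r s - rh s ≠ 0) :
    HasDerivAt (fun s => ((r s - rh s) * a s - 2 * η + 2 * ηh) / (r s - rh s))
      (a' + (2 * η - 2 * ηh) * (r' - rh') / (r s - rh s) ^ 2) s := by
  refine (((((hr.sub hrh).mul ha).sub_const (2 * η)).add_const (2 * ηh)).div
    (hr.sub hrh) hsep).congr_deriv ?_
  simp only [Pi.sub_apply, Pi.mul_apply]
  field_simp
  ring

end OneVariable

noncomputable def backlund₁ (η ηh : ℝ) (z₁ ρ ρh : ℝ → ℝ → ℝ) : ℝ → ℝ → ℝ :=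
  fun x t => ((2 * η - 2 * ηh) * ρ x t * ρh x t + z₁ x t * (ρ x t - ρh x t)) / (ρ x t - ρh x t)

noncomputable def backlund₂ (η ηh : ℝ) (z₂ ρ ρh : ℝ → ℝ → ℝ) : ℝ → ℝ → ℝ :=
  fun x t => ((ρ x t - ρh x t) * z₂ x t - 2 * η + 2 * ηh) / (ρ x t - ρh x t)

def RiccatiX (η : ℝ) (z₁ z₂ ρ : ℝ → ℝ → ℝ) : Prop :=
  ∀ x t, px ρ x t = z₂ x t * (ρ x t) ^ 2 - 2 * η * ρ x t + z₁ x t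

def RiccatiT (η : ℝ) (z₁ z₂ ρ : ℝ → ℝ → ℝ) : Prop :=
  ∀ x t, pt ρ x t = (-2 * η * z₂ x t - px z₂ x t) * (ρ x t) ^ 2
    + (2 * z₁ x t * z₂ x t + 4 * η ^ 2) * ρ x t - 2 * η * z₁ x t + px z₁ x t

section TwoVariables

variable {η ηh : ℝ} {z₁ z₂ ρ ρh : ℝ → ℝ → ℝ}

lemma px_backlund₁ (hz₁ : Differentiable ℝ (uncurry z₁)) (hρ : Differentiable ℝ (uncurry ρ))
    (hρh : Differentiable ℝ (uncurry ρh)) (hsep : ∀ x t, ρh x t ≠ ρ x t)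
    (hρx : RiccatiX η z₁ z₂ ρ) (hρhx : RiccatiX ηh z₁ z₂ ρh) :
    px (backlund₁ η ηh z₁ ρ ρh) = fun x t => px z₁ x t + (2 * η - 2 * ηh) *
      (2 * ρ x t * ρh x t * (η * ρh x t - ηh * ρ x t)
        + z₁ x t * (ρ x t + ρh x t) * (ρ x t - ρh x t)) / (ρ x t - ρh x t) ^ 2 := by
  funext x t
  have hD : ρ x t - ρh x t ≠ 0 := sub_ne_zero.mpr (hsep x t).symm
  have h : HasDerivAt (fun y => backlund₁ η ηh z₁ ρ ρh y t) _ x :=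
    hasDerivAt_backlund₁ (hasDerivAt_px hρ x t) (hasDerivAt_px hρh x t) (hasDerivAt_px hz₁ x t) hD
  rw [px_eq_of_hasDerivAt h, hρx x t, hρhx x t]
  field_simp
  ring

lemma px_backlund₂ (hz₂ : Differentiable ℝ (uncurry z₂)) (hρ : Differentiable ℝ (uncurry ρ))
    (hρh : Differentiable ℝ (uncurry ρh)) (hsep : ∀ x t, ρh x t ≠ ρ x t)
    (hρx : RiccatiX η z₁ z₂ ρ) (hρhx : RiccatiX ηh z₁ z₂ ρh) :
    px (backlund₂ η ηh z₂ ρ ρh) = fun x t => px z₂ x t + (2 * η - 2 * ηh) *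
      (2 * (ηh * ρh x t - η * ρ x t)
        + z₂ x t * (ρ x t + ρh x t) * (ρ x t - ρh x t)) / (ρ x t - ρh x t) ^ 2 := by
  funext x t
  have hD : ρ x t - ρh x t ≠ 0 := sub_ne_zero.mpr (hsep x t).symm
  have h : HasDerivAt (fun y => backlund₂ η ηh z₂ ρ ρh y t) _ x :=
    hasDerivAt_backlund₂ (hasDerivAt_px hρ x t) (hasDerivAt_px hρh x t) (hasDerivAt_px hz₂ x t) hD
  rw [px_eq_of_hasDerivAt h, hρx x t, hρhx x t]
  field_simp
  ring

lemma backlund₁_evolution (hz₁ : ContDiff ℝ 2 (uncurry z₁)) (hρ : Differentiable ℝ (uncurry ρ))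
    (hρh : Differentiable ℝ (uncurry ρh)) (hsep : ∀ x t, ρh x t ≠ ρ x t)
    (hz₁t : ∀ x t, pt z₁ x t = 2 * (z₁ x t) ^ 2 * z₂ x t + px (px z₁) x t)
    (hρx : RiccatiX η z₁ z₂ ρ) (hρt : RiccatiT η z₁ z₂ ρ)
    (hρhx : RiccatiX ηh z₁ z₂ ρh) (hρht : RiccatiT ηh z₁ z₂ ρh) (x t : ℝ) :
    pt (backlund₁ η ηh z₁ ρ ρh) x t = 2 * backlund₁ η ηh z₁ ρ ρh x t ^ 2
      * backlund₂ η ηh z₂ ρ ρh x t + px (px (backlund₁ η ηh z₁ ρ ρh)) x t := by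
  have hD : ρ x t - ρh x t ≠ 0 := sub_ne_zero.mpr (hsep x t).symm
  have hz₁' : Differentiable ℝ (uncurry z₁) := hz₁.differentiable (by norm_num)
  have ht : HasDerivAt (fun s => backlund₁ η ηh z₁ ρ ρh x s) _ t :=
    hasDerivAt_backlund₁ (hasDerivAt_pt hρ x t) (hasDerivAt_pt hρh x t) (hasDerivAt_pt hz₁' x t) hD
  -- `px (px z¹')` comes from differentiating the closed form of `px z¹'` once more.
  have hpx := px_backlund₁ hz₁' hρ hρh hsep hρx hρhx
  have r := hasDerivAt_px hρ x t
  have rh := hasDerivAt_px hρh x t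
  have a := hasDerivAt_px hz₁' x t
  have hxx : HasDerivAt (fun y => px (backlund₁ η ηh z₁ ρ ρh) y t) _ x :=
    ((hasDerivAt_px (differentiable_px hz₁) x t).add
      ((((((r.const_mul 2).mul rh).mul ((rh.const_mul η).sub (r.const_mul ηh))).add
        ((a.mul (r.add rh)).mul (r.sub rh))).const_mul (2 * η - 2 * ηh)).div
          ((r.sub rh).pow 2) (pow_ne_zero 2 hD))).congr_of_eventuallyEq
      (Filter.Eventually.of_forall fun y => congrFun (congrFun hpx y) t)
  rw [pt_eq_of_hasDerivAt ht, px_eq_of_hasDerivAt hxx]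
  simp only [backlund₁, backlund₂, Pi.add_apply, Pi.sub_apply, Pi.mul_apply, Pi.pow_apply]
  rw [hρt x t, hρht x t, hz₁t x t, hρx x t, hρhx x t]
  field_simp
  ring

lemma backlund₂_evolution (hz₂ : ContDiff ℝ 2 (uncurry z₂)) (hρ : Differentiable ℝ (uncurry ρ))
    (hρh : Differentiable ℝ (uncurry ρh)) (hsep : ∀ x t, ρh x t ≠ ρ x t)
    (hz₂t : ∀ x t, pt z₂ x t = -2 * z₁ x t * (z₂ x t) ^ 2 - px (px z₂) x t)
    (hρx : RiccatiX η z₁ z₂ ρ) (hρt : RiccatiT η z₁ z₂ ρ)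
    (hρhx : RiccatiX ηh z₁ z₂ ρh) (hρht : RiccatiT ηh z₁ z₂ ρh) (x t : ℝ) :
    pt (backlund₂ η ηh z₂ ρ ρh) x t = -2 * backlund₁ η ηh z₁ ρ ρh x t
      * backlund₂ η ηh z₂ ρ ρh x t ^ 2 - px (px (backlund₂ η ηh z₂ ρ ρh)) x t := by
  have hD : ρ x t - ρh x t ≠ 0 := sub_ne_zero.mpr (hsep x t).symm
  have hz₂' : Differentiable ℝ (uncurry z₂) := hz₂.differentiable (by norm_num)
  have ht : HasDerivAt (fun s => backlund₂ η ηh z₂ ρ ρh x s) _ t :=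
    hasDerivAt_backlund₂ (hasDerivAt_pt hρ x t) (hasDerivAt_pt hρh x t) (hasDerivAt_pt hz₂' x t) hD
  have hpx := px_backlund₂ hz₂' hρ hρh hsep hρx hρhx
  have r := hasDerivAt_px hρ x t
  have rh := hasDerivAt_px hρh x t
  have b := hasDerivAt_px hz₂' x t
  have hxx : HasDerivAt (fun y => px (backlund₂ η ηh z₂ ρ ρh) y t) _ x :=
    ((hasDerivAt_px (differentiable_px hz₂) x t).add
      ((((((rh.const_mul ηh).sub (r.const_mul η)).const_mul 2).add
        ((b.mul (r.add rh)).mul (r.sub rh))).const_mul (2 * η - 2 * ηh)).div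
          ((r.sub rh).pow 2) (pow_ne_zero 2 hD))).congr_of_eventuallyEq
      (Filter.Eventually.of_forall fun y => congrFun (congrFun hpx y) t)
  rw [pt_eq_of_hasDerivAt ht, px_eq_of_hasDerivAt hxx]
  simp only [backlund₁, backlund₂, Pi.add_apply, Pi.sub_apply, Pi.mul_apply, Pi.pow_apply]
  rw [hρt x t, hρht x t, hz₂t x t, hρx x t, hρhx x t]
  field_simp
  ring

end TwoVariables

theorem coupled_schrodinger_auto_backlund_general (η ηh : ℝ)
    (z₁ z₂ ρ ρh : ℝ → ℝ → ℝ)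
    (hz₁ : ContDiff ℝ (⊤ : ℕ∞) (Function.uncurry z₁))
    (hz₂ : ContDiff ℝ (⊤ : ℕ∞) (Function.uncurry z₂))
    (hρ : ContDiff ℝ (⊤ : ℕ∞) (Function.uncurry ρ))
    (hρh : ContDiff ℝ (⊤ : ℕ∞) (Function.uncurry ρh))
    (hsep : ∀ x t, ρh x t ≠ ρ x t)
    (hz₁t : ∀ x t, pt z₁ x t = 2 * (z₁ x t) ^ 2 * z₂ x t + px (px z₁) x t)
    (hz₂t : ∀ x t, pt z₂ x t = -2 * z₁ x t * (z₂ x t) ^ 2 - px (px z₂) x t)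
    (hρx : ∀ x t, px ρ x t = z₂ x t * (ρ x t) ^ 2 - 2 * η * ρ x t + z₁ x t)
    (hρt : ∀ x t, pt ρ x t
      = (-2 * η * z₂ x t - px z₂ x t) * (ρ x t) ^ 2
        + (2 * z₁ x t * z₂ x t + 4 * η ^ 2) * ρ x t - 2 * η * z₁ x t + px z₁ x t)
    (hρhx : ∀ x t, px ρh x t = z₂ x t * (ρh x t) ^ 2 - 2 * ηh * ρh x t + z₁ x t)
    (hρht : ∀ x t, pt ρh x t
      = (-2 * ηh * z₂ x t - px z₂ x t) * (ρh x t) ^ 2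
        + (2 * z₁ x t * z₂ x t + 4 * ηh ^ 2) * ρh x t - 2 * ηh * z₁ x t + px z₁ x t) :
    ∀ x t,
      pt (fun x t =>
            ((2 * η - 2 * ηh) * ρ x t * ρh x t + z₁ x t * (ρ x t - ρh x t))
              / (ρ x t - ρh x t)) x t
        = 2 * (((2 * η - 2 * ηh) * ρ x t * ρh x t + z₁ x t * (ρ x t - ρh x t))
              / (ρ x t - ρh x t)) ^ 2
            * (((ρ x t - ρh x t) * z₂ x t - 2 * η + 2 * ηh) / (ρ x t - ρh x t))
          + px (px (fun x t =>
              ((2 * η - 2 * ηh) * ρ x t * ρh x t + z₁ x t * (ρ x t - ρh x t))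
                / (ρ x t - ρh x t))) x t
      ∧ pt (fun x t =>
            ((ρ x t - ρh x t) * z₂ x t - 2 * η + 2 * ηh) / (ρ x t - ρh x t)) x t
        = -2 * (((2 * η - 2 * ηh) * ρ x t * ρh x t + z₁ x t * (ρ x t - ρh x t))
              / (ρ x t - ρh x t))
            * (((ρ x t - ρh x t) * z₂ x t - 2 * η + 2 * ηh) / (ρ x t - ρh x t)) ^ 2
          - px (px (fun x t =>
              ((ρ x t - ρh x t) * z₂ x t - 2 * η + 2 * ηh) / (ρ x t - ρh x t))) x t := by
  have h2 : ∀ {f : ℝ → ℝ → ℝ}, ContDiff ℝ (⊤ : ℕ∞) (uncurry f) → ContDiff ℝ 2 (uncurry f) :=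
    fun hf => hf.of_le (WithTop.coe_le_coe.mpr le_top)
  have hρ' := hρ.differentiable (by simp)
  have hρh' := hρh.differentiable (by simp)
  exact fun x t =>
    ⟨backlund₁_evolution (h2 hz₁) hρ' hρh' hsep hz₁t hρx hρt hρhx hρht x t,
      backlund₂_evolution (h2 hz₂) hρ' hρh' hsep hz₂t hρx hρt hρhx hρht x t⟩

/-- the auto-Bäcklund transformation of the coupled Schrödinger system
`z¹_t = 2(z¹)²z² + z¹_xx`, `z²_t = −2z¹(z²)² − z²_xx` obtained from the doubled
Riccati covering with parameters `η ≠ η̂`: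
`z¹' = ((2η−2η̂)ρρ̂ + z¹(ρ−ρ̂))/(ρ−ρ̂)`, `z²' = ((ρ−ρ̂)z² − 2η + 2η̂)/(ρ−ρ̂)`. -/
theorem coupled_schrodinger_auto_backlund (η ηh : ℝ) (hne : ηh ≠ η)
    (z₁ z₂ ρ ρh : ℝ → ℝ → ℝ)
    (hz₁ : ContDiff ℝ (⊤ : ℕ∞) (Function.uncurry z₁))
    (hz₂ : ContDiff ℝ (⊤ : ℕ∞) (Function.uncurry z₂))
    (hρ : ContDiff ℝ (⊤ : ℕ∞) (Function.uncurry ρ))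
    (hρh : ContDiff ℝ (⊤ : ℕ∞) (Function.uncurry ρh))
    (hsep : ∀ x t, ρh x t ≠ ρ x t)
    (hz₁t : ∀ x t, pt z₁ x t = 2 * (z₁ x t) ^ 2 * z₂ x t + px (px z₁) x t)
    (hz₂t : ∀ x t, pt z₂ x t = -2 * z₁ x t * (z₂ x t) ^ 2 - px (px z₂) x t)
    (hρx : ∀ x t, px ρ x t = z₂ x t * (ρ x t) ^ 2 - 2 * η * ρ x t + z₁ x t)
    (hρt : ∀ x t, pt ρ x t
      = (-2 * η * z₂ x t - px z₂ x t) * (ρ x t) ^ 2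
        + (2 * z₁ x t * z₂ x t + 4 * η ^ 2) * ρ x t - 2 * η * z₁ x t + px z₁ x t)
    (hρhx : ∀ x t, px ρh x t = z₂ x t * (ρh x t) ^ 2 - 2 * ηh * ρh x t + z₁ x t)
    (hρht : ∀ x t, pt ρh x t
      = (-2 * ηh * z₂ x t - px z₂ x t) * (ρh x t) ^ 2
        + (2 * z₁ x t * z₂ x t + 4 * ηh ^ 2) * ρh x t - 2 * ηh * z₁ x t + px z₁ x t) :
    ∀ x t,
      pt (fun x t =>
            ((2 * η - 2 * ηh) * ρ x t * ρh x t + z₁ x t * (ρ x t - ρh x t))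
              / (ρ x t - ρh x t)) x t
        = 2 * (((2 * η - 2 * ηh) * ρ x t * ρh x t + z₁ x t * (ρ x t - ρh x t))
              / (ρ x t - ρh x t)) ^ 2
            * (((ρ x t - ρh x t) * z₂ x t - 2 * η + 2 * ηh) / (ρ x t - ρh x t))
          + px (px (fun x t =>
              ((2 * η - 2 * ηh) * ρ x t * ρh x t + z₁ x t * (ρ x t - ρh x t))
                / (ρ x t - ρh x t))) x t
      ∧ pt (fun x t =>
            ((ρ x t - ρh x t) * z₂ x t - 2 * η + 2 * ηh) / (ρ x t - ρh x t)) x t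
        = -2 * (((2 * η - 2 * ηh) * ρ x t * ρh x t + z₁ x t * (ρ x t - ρh x t))
              / (ρ x t - ρh x t))
            * (((ρ x t - ρh x t) * z₂ x t - 2 * η + 2 * ηh) / (ρ x t - ρh x t)) ^ 2
          - px (px (fun x t =>
              ((ρ x t - ρh x t) * z₂ x t - 2 * η + 2 * ηh) / (ρ x t - ρh x t))) x t :=
  coupled_schrodinger_auto_backlund_general η ηh z₁ z₂ ρ ρh hz₁ hz₂ hρ hρh hsep hz₁t hz₂t hρx hρt
    hρhx hρht
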